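/- Let b > 0, L ≥ 0, and let u, v : [0,b] → ℝ be continuous with radial averages ũ, ṽ satisfying |u(r) − ũ(r)| ≤ L·r and |v(r) − ṽ(r)| ≤ L·r for all r ∈ (0,b]. Define g_u(r) := exp(−∫_r^b (1/s)(u(s) − ũ(s))² ds), g_v(r) := exp(−∫_r^b (1/s)(v(s) − ṽ(s))² ds), and the Bondi masses M_u := (b/2)·(1 − (1/b)∫_0^b g_u(s) ds) and M_v := (b/2)·(1 − (1/b)∫_0^b g_v(s) ds). Then |M_u − M_v| ≤ 3·L·b^{3/2}·(∫_0^b (u(s) − v(s))² ds)^{1/2}. -/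

import Mathlib

/-!
Write `w = u - v` and `N = ‖w‖_{L²(0,b)}`. By Cauchy–Schwarz `|ũ(r) - ṽ(r)| ≤ N / √r`. In
`(1/r)((u - ũ)² - (v - ṽ)²) = (1/r)((u - ũ) + (v - ṽ))((u - ũ) - (v - ṽ))` the first factor is at
most `2 L r`, which absorbs the weight `1/r`, so the exponents of `g_u` and `g_v` differ by at most
`2 L ∫₀ᵇ (|w| + N r^{-1/2}) dr ≤ 2 L (√b N + 2 √b N) = 6 L √b N`. As `exp` is 1-Lipschitz on
`(-∞, 0]`, the same bound holds for `|g_u - g_v|`, and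
`|M_u - M_v| = ½ |∫₀ᵇ (g_u - g_v)| ≤ 3 L b^{3/2} N`.
-/

open MeasureTheory intervalIntegral Set

noncomputable def radialAverage (f : ℝ → ℝ) (r : ℝ) : ℝ := (1 / r) * ∫ s in (0:ℝ)..r, f s

theorem Real.abs_exp_neg_sub_exp_neg_le {a c : ℝ} (ha : 0 ≤ a) (hc : 0 ≤ c) :
    |Real.exp (-a) - Real.exp (-c)| ≤ |a - c| := by
  wlog hac : a ≤ c generalizing a c
  · rw [abs_sub_comm, abs_sub_comm a]
    exact this hc ha (le_of_not_ge hac)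
  have hexp : Real.exp (-c) ≤ Real.exp (-a) := Real.exp_le_exp.2 (neg_le_neg hac)
  rw [abs_of_nonneg (sub_nonneg.2 hexp), abs_of_nonpos (sub_nonpos.2 hac)]
  calc Real.exp (-a) - Real.exp (-c) = Real.exp (-a) * (1 - Real.exp (-(c - a))) := by
        rw [mul_sub, ← Real.exp_add]; ring_nf
    _ ≤ 1 * (c - a) := by
        refine mul_le_mul (Real.exp_le_one_iff.2 (by linarith)) ?_ ?_ zero_le_one
        · linarith [Real.add_one_le_exp (-(c - a))]
        · linarith [Real.exp_le_one_iff.2 (show -(c - a) ≤ 0 by linarith)]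
    _ = -(a - c) := by ring

theorem abs_inv_mul_sq_sub_inv_mul_sq_le {a c L t : ℝ} (ht : 0 < t) (ha : |a| ≤ L * t)
    (hc : |c| ≤ L * t) : |1 / t * a ^ 2 - 1 / t * c ^ 2| ≤ 2 * L * |a - c| := by
  have hsum : |a + c| ≤ 2 * L * t := (abs_add_le a c).trans (by linarith)
  calc |1 / t * a ^ 2 - 1 / t * c ^ 2| = 1 / t * (|a + c| * |a - c|) := by
        rw [← mul_sub, sq_sub_sq, abs_mul, abs_mul, abs_of_pos (one_div_pos.2 ht)]
    _ ≤ 1 / t * (2 * L * t * |a - c|) := by gcongr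
    _ = 2 * L * |a - c| := by field_simp

theorem integral_abs_le_sqrt_mul_sqrt_integral_sq {a b : ℝ} (hab : a ≤ b) {w : ℝ → ℝ}
    (hw : ContinuousOn w (Icc a b)) :
    ∫ x in a..b, |w x| ≤ √(b - a) * √(∫ x in a..b, w x ^ 2) := by
  obtain ⟨C, hC⟩ := isCompact_Icc.exists_bound_of_continuousOn hw
  have hmeas : AEStronglyMeasurable w (volume.restrict (Ioc a b)) :=
    (hw.mono Ioc_subset_Icc_self).aestronglyMeasurable measurableSet_Ioc
  have hbound : ∀ᵐ x ∂(volume.restrict (Ioc a b)), ‖|w x|‖ ≤ C := by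
    rw [ae_restrict_iff' measurableSet_Ioc]
    exact Filter.Eventually.of_forall fun x hx => by
      simpa only [norm_abs_eq_norm] using hC x (Ioc_subset_Icc_self hx)
  have hw2 : MemLp (fun x => |w x|) (ENNReal.ofReal 2) (volume.restrict (Ioc a b)) :=
    (memLp_top_of_bound hmeas.norm C hbound).mono_exponent le_top
  have h1 : MemLp (fun _ => (1 : ℝ)) (ENNReal.ofReal 2) (volume.restrict (Ioc a b)) :=
    memLp_const 1
  have holder := integral_mul_le_Lp_mul_Lq_of_nonneg Real.HolderConjugate.two_two
    (Filter.Eventually.of_forall fun x => abs_nonneg (w x))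
    (Filter.Eventually.of_forall fun _ => zero_le_one) hw2 h1
  simp only [mul_one, one_pow, MeasureTheory.integral_const, smul_eq_mul, Real.rpow_two, sq_abs,
    measureReal_restrict_apply_univ, Real.volume_real_Ioc_of_le hab] at holder
  rw [integral_of_le hab, integral_of_le hab, Real.sqrt_eq_rpow, Real.sqrt_eq_rpow, mul_comm]
  exact holder

theorem continuousOn_radialAverage {u : ℝ → ℝ} {b : ℝ} (hb : 0 ≤ b)
    (hu : ContinuousOn u (Icc 0 b)) : ContinuousOn (radialAverage u) (Ioc 0 b) := by
  have hprim : ContinuousOn (fun r => ∫ s in (0:ℝ)..r, u s) (Icc 0 b) := by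
    have := continuousOn_primitive_interval (a := 0) (b := b) (μ := volume)
      (by simpa only [uIcc_of_le hb] using hu.integrableOn_Icc)
    simpa only [uIcc_of_le hb] using this
  exact (continuousOn_const.div continuousOn_id fun r hr => hr.1.ne').mul
    (hprim.mono Ioc_subset_Icc_self)

theorem radialAverage_sub {u v : ℝ → ℝ} {b r : ℝ} (hu : ContinuousOn u (Icc 0 b))
    (hv : ContinuousOn v (Icc 0 b)) (hr : r ∈ Ioc 0 b) :
    radialAverage (fun s => u s - v s) r = radialAverage u r - radialAverage v r := by
  have hsub : uIcc 0 r ⊆ Icc 0 b := by rw [uIcc_of_le hr.1.le]; exact Icc_subset_Icc le_rfl hr.2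
  rw [radialAverage, radialAverage, radialAverage, ← mul_sub,
    integral_sub ((hu.mono hsub).intervalIntegrable) ((hv.mono hsub).intervalIntegrable)]

theorem abs_radialAverage_le {w : ℝ → ℝ} {b r : ℝ} (hw : ContinuousOn w (Icc 0 b))
    (hr : r ∈ Ioc 0 b) :
    |radialAverage w r| ≤ √(∫ s in (0:ℝ)..b, w s ^ 2) * r ^ (-(1 / 2) : ℝ) := by
  have hr0 : 0 < r := hr.1
  have hwr : ContinuousOn w (Icc 0 r) := hw.mono (Icc_subset_Icc le_rfl hr.2)
  have hmono : ∫ s in (0:ℝ)..r, w s ^ 2 ≤ ∫ s in (0:ℝ)..b, w s ^ 2 :=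
    integral_mono_interval le_rfl hr0.le hr.2
      (Filter.Eventually.of_forall fun s => sq_nonneg (w s))
      ((hw.pow 2).intervalIntegrable_of_Icc (hr0.le.trans hr.2))
  have hscale : 1 / r * √r = r ^ (-(1 / 2) : ℝ) := by
    rw [Real.sqrt_eq_rpow, one_div, ← Real.rpow_neg_one, ← Real.rpow_add hr0]
    norm_num
  calc |radialAverage w r| = 1 / r * |∫ s in (0:ℝ)..r, w s| := by
        rw [radialAverage, abs_mul, abs_of_pos (one_div_pos.2 hr0)]
    _ ≤ 1 / r * (√r * √(∫ s in (0:ℝ)..r, w s ^ 2)) := by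
        gcongr
        refine (abs_integral_le_integral_abs hr0.le).trans ?_
        simpa only [sub_zero] using integral_abs_le_sqrt_mul_sqrt_integral_sq hr0.le hwr
    _ ≤ 1 / r * (√r * √(∫ s in (0:ℝ)..b, w s ^ 2)) := by gcongr
    _ = √(∫ s in (0:ℝ)..b, w s ^ 2) * r ^ (-(1 / 2) : ℝ) := by rw [← hscale]; ring

theorem integrableOn_inv_mul_sq_of_abs_le {e : ℝ → ℝ} {b L : ℝ} (he : ContinuousOn e (Ioc 0 b))
    (hbd : ∀ r ∈ Ioc 0 b, |e r| ≤ L * r) :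
    IntegrableOn (fun t => 1 / t * e t ^ 2) (Ioc 0 b) := by
  have hcont : ContinuousOn (fun t => 1 / t * e t ^ 2) (Ioc 0 b) :=
    (continuousOn_const.div continuousOn_id fun t ht => ht.1.ne').mul (he.pow 2)
  refine Integrable.of_bound (hcont.aestronglyMeasurable measurableSet_Ioc) (L ^ 2 * b) ?_
  rw [ae_restrict_iff' measurableSet_Ioc]
  refine Filter.Eventually.of_forall fun t ht => ?_
  have hsq : e t ^ 2 ≤ (L * t) ^ 2 := sq_abs (e t) ▸ pow_le_pow_left₀ (abs_nonneg _) (hbd t ht) 2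
  rw [Real.norm_of_nonneg (by have := ht.1; positivity)]
  calc 1 / t * e t ^ 2 ≤ 1 / t * (L * t) ^ 2 := by have := ht.1; gcongr
    _ = L ^ 2 * t := by field_simp [ht.1.ne']
    _ ≤ L ^ 2 * b := by gcongr; exact ht.2

theorem abs_integral_sub_integral_le {F G h : ℝ → ℝ} {b s : ℝ} (hF : IntegrableOn F (Ioc 0 b))
    (hG : IntegrableOn G (Ioc 0 b)) (hh : IntegrableOn h (Ioc 0 b))
    (hFG : ∀ t ∈ Ioc 0 b, |F t - G t| ≤ h t) (hs : s ∈ Icc 0 b) :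
    |(∫ t in s..b, F t) - ∫ t in s..b, G t| ≤ ∫ t in (0:ℝ)..b, h t := by
  have hsub : Ioc s b ⊆ Ioc 0 b := Ioc_subset_Ioc_left hs.1
  have hii : ∀ {f : ℝ → ℝ}, IntegrableOn f (Ioc 0 b) → IntervalIntegrable f volume s b :=
    fun hf => (intervalIntegrable_iff_integrableOn_Ioc_of_le hs.2).2 (hf.mono_set hsub)
  rw [← integral_sub (hii hF) (hii hG)]
  calc |∫ t in s..b, (F t - G t)| ≤ ∫ t in s..b, h t :=
        norm_integral_le_of_norm_le (f := fun t => F t - G t) hs.2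
          (Filter.Eventually.of_forall fun t ht => hFG t (hsub ht)) (hii hh)
    _ ≤ ∫ t in (0:ℝ)..b, h t := by
        refine integral_mono_interval hs.1 hs.2 le_rfl ?_
          ((intervalIntegrable_iff_integrableOn_Ioc_of_le (hs.1.trans hs.2)).2 hh)
        rw [Filter.EventuallyLE, ae_restrict_iff' measurableSet_Ioc]
        exact Filter.Eventually.of_forall fun t ht => (abs_nonneg _).trans (hFG t ht)

theorem intervalIntegrable_exp_neg_integral {F : ℝ → ℝ} {b : ℝ} (hb : 0 ≤ b)
    (hF : IntegrableOn F (Ioc 0 b)) :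
    IntervalIntegrable (fun s => Real.exp (-∫ t in s..b, F t)) volume 0 b := by
  have hprim : ContinuousOn (fun s => ∫ t in s..b, F t) (uIcc 0 b) :=
    continuousOn_primitive_interval_left
      (by rwa [uIcc_of_le hb, integrableOn_Icc_iff_integrableOn_Ioc])
  exact (Real.continuous_exp.comp_continuousOn hprim.neg).intervalIntegrable

theorem integral_nonneg_of_nonneg_on_Ioc {F : ℝ → ℝ} {b s : ℝ} (hF0 : ∀ t ∈ Ioc 0 b, 0 ≤ F t)
    (hs : s ∈ Icc 0 b) : 0 ≤ ∫ t in s..b, F t := by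
  rw [integral_of_le hs.2]
  exact setIntegral_nonneg measurableSet_Ioc fun t ht => hF0 t (Ioc_subset_Ioc_left hs.1 ht)

theorem abs_integral_exp_neg_integral_sub_le {F G : ℝ → ℝ} {b K : ℝ} (hb : 0 ≤ b)
    (hF : IntegrableOn F (Ioc 0 b)) (hG : IntegrableOn G (Ioc 0 b))
    (hF0 : ∀ t ∈ Ioc 0 b, 0 ≤ F t) (hG0 : ∀ t ∈ Ioc 0 b, 0 ≤ G t)
    (hK : ∀ s ∈ Icc 0 b, |(∫ t in s..b, F t) - ∫ t in s..b, G t| ≤ K) :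
    |(∫ s in (0:ℝ)..b, Real.exp (-∫ t in s..b, F t))
        - ∫ s in (0:ℝ)..b, Real.exp (-∫ t in s..b, G t)| ≤ K * b := by
  rw [← integral_sub (intervalIntegrable_exp_neg_integral hb hF)
    (intervalIntegrable_exp_neg_integral hb hG)]
  have := norm_integral_le_of_norm_le_const (a := 0) (b := b) (C := K)
    (f := fun s => Real.exp (-∫ t in s..b, F t) - Real.exp (-∫ t in s..b, G t)) fun s hs => by
      rw [uIoc_of_le hb] at hs
      have hs' : s ∈ Icc 0 b := Ioc_subset_Icc_self hs
      exact (Real.abs_exp_neg_sub_exp_neg_le (integral_nonneg_of_nonneg_on_Ioc hF0 hs')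
        (integral_nonneg_of_nonneg_on_Ioc hG0 hs')).trans (hK s hs')
  rwa [sub_zero, abs_of_nonneg hb] at this

theorem intervalIntegrable_abs_add_mul_rpow {w : ℝ → ℝ} {b : ℝ} (hb : 0 ≤ b)
    (hw : ContinuousOn w (Icc 0 b)) (N : ℝ) :
    IntervalIntegrable (fun t => |w t| + N * t ^ (-(1 / 2) : ℝ)) volume 0 b :=
  (hw.abs.intervalIntegrable_of_Icc hb).add ((intervalIntegrable_rpow' (by norm_num)).const_mul N)

theorem integral_abs_add_mul_rpow_le {w : ℝ → ℝ} {b : ℝ} (hb : 0 ≤ b)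
    (hw : ContinuousOn w (Icc 0 b)) :
    ∫ t in (0:ℝ)..b, (|w t| + √(∫ s in (0:ℝ)..b, w s ^ 2) * t ^ (-(1 / 2) : ℝ))
      ≤ 3 * √b * √(∫ s in (0:ℝ)..b, w s ^ 2) := by
  have hrpow : ∫ t in (0:ℝ)..b, t ^ (-(1 / 2) : ℝ) = 2 * √b := by
    rw [integral_rpow (Or.inl (by norm_num)), Real.sqrt_eq_rpow]
    norm_num
    ring
  have hcs := integral_abs_le_sqrt_mul_sqrt_integral_sq hb hw
  rw [sub_zero] at hcs
  rw [integral_add (hw.abs.intervalIntegrable_of_Icc hb)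
    ((intervalIntegrable_rpow' (by norm_num)).const_mul _), intervalIntegral.integral_const_mul,
    hrpow]
  linarith

theorem abs_inv_mul_sq_sub_inv_mul_sq_le_of_radialAverage {u v ut vt : ℝ → ℝ} {b L t : ℝ}
    (hL : 0 ≤ L) (hu : ContinuousOn u (Icc 0 b)) (hv : ContinuousOn v (Icc 0 b))
    (ht : t ∈ Ioc 0 b) (hut : ut t = radialAverage u t) (hvt : vt t = radialAverage v t)
    (hub : |u t - ut t| ≤ L * t) (hvb : |v t - vt t| ≤ L * t) :
    |1 / t * (u t - ut t) ^ 2 - 1 / t * (v t - vt t) ^ 2|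
      ≤ 2 * L * (|u t - v t| + √(∫ s in (0:ℝ)..b, (u s - v s) ^ 2) * t ^ (-(1 / 2) : ℝ)) := by
  refine (abs_inv_mul_sq_sub_inv_mul_sq_le ht.1 hub hvb).trans ?_
  have havg : ut t - vt t = radialAverage (fun s => u s - v s) t := by
    rw [hut, hvt, radialAverage_sub hu hv ht]
  gcongr
  calc |u t - ut t - (v t - vt t)| = |(u t - v t) - (ut t - vt t)| := by ring_nf
    _ ≤ |u t - v t| + |ut t - vt t| := abs_sub _ _
    _ ≤ _ := by rw [havg]; gcongr; exact abs_radialAverage_le (hu.sub hv) ht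

theorem abs_half_mul_one_sub_sub_half_mul_one_sub {b : ℝ} (hb : b ≠ 0) (x y : ℝ) :
    |b / 2 * (1 - 1 / b * x) - b / 2 * (1 - 1 / b * y)| = |x - y| / 2 := by
  rw [show b / 2 * (1 - 1 / b * x) - b / 2 * (1 - 1 / b * y) = (y - x) / 2 by field_simp; ring,
    abs_div, abs_two, abs_sub_comm]

/-- Bondi mass error estimate (Corollary 4.5):
`|M_u - M_v| ≤ 3 L b^{3/2} ‖u - v‖_{L²(0,b)}`, where
`M_u = (b/2)(1 - (1/b)∫_0^b g_u)` with `g_u(r) = exp(-∫_r^b (1/s)(u - ũ)² ds)`. -/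
theorem stmt19 (b L : ℝ) (hb : 0 < b) (hL : 0 ≤ L)
    (u v ut vt : ℝ → ℝ)
    (hu : ContinuousOn u (Set.Icc 0 b)) (hv : ContinuousOn v (Set.Icc 0 b))
    (hut : ∀ r ∈ Set.Ioc 0 b, ut r = (1 / r) * ∫ s in (0:ℝ)..r, u s)
    (hvt : ∀ r ∈ Set.Ioc 0 b, vt r = (1 / r) * ∫ s in (0:ℝ)..r, v s)
    (hub : ∀ r ∈ Set.Ioc 0 b, |u r - ut r| ≤ L * r)
    (hvb : ∀ r ∈ Set.Ioc 0 b, |v r - vt r| ≤ L * r) :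
    |(b / 2) * (1 - (1 / b) *
        ∫ s in (0:ℝ)..b, Real.exp (-(∫ t in s..b, (1 / t) * (u t - ut t) ^ 2)))
      - (b / 2) * (1 - (1 / b) *
        ∫ s in (0:ℝ)..b, Real.exp (-(∫ t in s..b, (1 / t) * (v t - vt t) ^ 2)))|
      ≤ 3 * L * b ^ ((3 : ℝ) / 2) * Real.sqrt (∫ s in (0:ℝ)..b, (u s - v s) ^ 2) := by
  set N := √(∫ s in (0:ℝ)..b, (u s - v s) ^ 2)
  have hFu := integrableOn_inv_mul_sq_of_abs_le (e := fun t => u t - ut t)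
    ((hu.mono Ioc_subset_Icc_self).sub ((continuousOn_radialAverage hb.le hu).congr hut)) hub
  have hFv := integrableOn_inv_mul_sq_of_abs_le (e := fun t => v t - vt t)
    ((hv.mono Ioc_subset_Icc_self).sub ((continuousOn_radialAverage hb.le hv).congr hvt)) hvb
  have hdom := (intervalIntegrable_abs_add_mul_rpow (w := fun s => u s - v s) hb.le
    (hu.sub hv) N).const_mul (2 * L)
  have hexponent (s) (hs : s ∈ Icc 0 b) := abs_integral_sub_integral_le hFu hFv
    ((intervalIntegrable_iff_integrableOn_Ioc_of_le hb.le).1 hdom)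
    (fun t ht => abs_inv_mul_sq_sub_inv_mul_sq_le_of_radialAverage hL hu hv ht (hut t ht)
      (hvt t ht) (hub t ht) (hvb t ht)) hs
  have hmetric := abs_integral_exp_neg_integral_sub_le hb.le hFu hFv
    (fun t ht => by have := ht.1; positivity) (fun t ht => by have := ht.1; positivity) hexponent
  have hdom_int := integral_abs_add_mul_rpow_le (w := fun s => u s - v s) hb.le (hu.sub hv)
  rw [intervalIntegral.integral_const_mul] at hmetric
  have hpow : b ^ ((3 : ℝ) / 2) = b * √b := by
    rw [show (3 : ℝ) / 2 = 1 + 1 / 2 by norm_num, Real.rpow_add hb, Real.rpow_one,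
      ← Real.sqrt_eq_rpow]
  rw [abs_half_mul_one_sub_sub_half_mul_one_sub hb.ne', hpow]
  calc _ ≤ 2 * L * (3 * √b * N) * b / 2 := by gcongr; exact hmetric.trans (by gcongr)
    _ = 3 * L * (b * √b) * N := by ring
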